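/- arXiv:gr-qc/0012058 — 2 statements merged into one kernel-verified Lean document; each statement's English description precedes it below -/
import Mathlib

section
/- Define the symmetric covariant 2-tensor g = ω¹⊗ω³ + ω³⊗ω¹ − ω²⊗ω². Then L_D g = 2U ω¹⊗ω¹ + (V+a)(ω¹⊗ω² + ω²⊗ω¹) + W(ω¹⊗ω³ + ω³⊗ω¹) + 2b ω²⊗ω², where U, V, W are as defined from F, a, b. In particular, L_D g = 2U ω¹⊗ω¹ + W·g if and only if V + a = 0 and 2b = −W. -/
noncomputable section

/-- Points of ℝ⁴ with coordinates (z, z', z'', s) = (x 0, x 1, x 2, x 3). -/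
abbrev Pt := Fin 4 → ℝ

/-- Partial derivative of a scalar function in the i-th coordinate direction. -/
def pd (i : Fin 4) (f : Pt → ℝ) (x : Pt) : ℝ := fderiv ℝ f x (Pi.single i 1)

/-- A one-form, given by its covariant components. -/
abbrev Form1 := Pt → Fin 4 → ℝ

/-- β¹ = dz - z' ds -/
def beta1 : Form1 := fun x => ![1, 0, 0, -x 1]
/-- β² = dz' - z'' ds -/
def beta2 : Form1 := fun x => ![0, 1, 0, -x 2]
/-- β³ = dz'' - F ds -/
def beta3 (F : Pt → ℝ) : Form1 := fun x => ![0, 0, 1, -F x]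
/-- the one-form ds -/
def dsf : Form1 := fun _ => ![0, 0, 0, 1]

/-- The total-derivative vector field D = ∂_s + z'∂_z + z''∂_{z'} + F∂_{z''}. -/
def Dvec (F : Pt → ℝ) : Pt → Fin 4 → ℝ := fun x => ![x 1, x 2, F x, 1]

/-- Action of the vector field D on scalar functions (the total s-derivative). -/
def Dop (F : Pt → ℝ) (f : Pt → ℝ) (x : Pt) : ℝ := ∑ j, Dvec F x j * pd j f x

/-- Lie derivative of a one-form along a vector field X:
`(L_X ω)_i = X^j ∂_j ω_i + ω_j ∂_i X^j`. -/
def lie1 (X : Pt → Fin 4 → ℝ) (ω : Form1) : Form1 :=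
  fun x i => (∑ j, X x j * pd j (fun y => ω y i) x) + ∑ j, ω x j * pd i (fun y => X y j) x

/-- Lie derivative of a covariant 2-tensor along a vector field X. -/
def lie2 (X : Pt → Fin 4 → ℝ) (g : Pt → Fin 4 → Fin 4 → ℝ) :
    Pt → Fin 4 → Fin 4 → ℝ :=
  fun x i j => (∑ k, X x k * pd k (fun y => g y i j) x)
    + (∑ k, g x k j * pd i (fun y => X y k) x)
    + ∑ k, g x i k * pd j (fun y => X y k) x

/-- ω¹ = β¹ -/
def omega1 : Form1 := beta1
/-- ω² = β² -/
def omega2 : Form1 := beta2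
/-- ω³ = β³ + aβ¹ + bβ² -/
def omega3 (F a b : Pt → ℝ) : Form1 :=
  fun x i => beta3 F x i + a x * beta1 x i + b x * beta2 x i

/-- U = F_z - aF_{z''} + D(a) - ab -/
def Ufun (F a b : Pt → ℝ) (x : Pt) : ℝ :=
  pd 0 F x - a x * pd 2 F x + Dop F a x - a x * b x
/-- V = F_{z'} - bF_{z''} + a + D(b) - b² -/
def Vfun (F a b : Pt → ℝ) (x : Pt) : ℝ :=
  pd 1 F x - b x * pd 2 F x + a x + Dop F b x - (b x) ^ 2
/-- W = F_{z''} + b -/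
def Wfun (F b : Pt → ℝ) (x : Pt) : ℝ := pd 2 F x + b x

/-- g = ω¹⊗ω³ + ω³⊗ω¹ - ω²⊗ω² -/
def g3 (F a b : Pt → ℝ) : Pt → Fin 4 → Fin 4 → ℝ :=
  fun x i j => omega1 x i * omega3 F a b x j + omega3 F a b x i * omega1 x j
    - omega2 x i * omega2 x j

section Aux
set_option maxHeartbeats 1000000

lemma pd_add' {f g : Pt → ℝ} {x : Pt} (hf : DifferentiableAt ℝ f x)
    (hg : DifferentiableAt ℝ g x) (i : Fin 4) :
    pd i (fun y => f y + g y) x = pd i f x + pd i g x := by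
  simp [pd, fderiv_fun_add hf hg]

lemma pd_mul' {f g : Pt → ℝ} {x : Pt} (hf : DifferentiableAt ℝ f x)
    (hg : DifferentiableAt ℝ g x) (i : Fin 4) :
    pd i (fun y => f y * g y) x = pd i f x * g x + f x * pd i g x := by
  simp [pd, fderiv_fun_mul hf hg]; ring

lemma pd_neg' {f : Pt → ℝ} {x : Pt} (i : Fin 4) :
    pd i (fun y => -f y) x = -pd i f x := by
  simp [pd, fderiv_neg]

lemma pd_sub' {f g : Pt → ℝ} {x : Pt} (hf : DifferentiableAt ℝ f x)
    (hg : DifferentiableAt ℝ g x) (i : Fin 4) :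
    pd i (fun y => f y - g y) x = pd i f x - pd i g x := by
  simp [pd, fderiv_fun_sub hf hg]

lemma pd_const' (c : ℝ) (i : Fin 4) (x : Pt) : pd i (fun _ => c) x = 0 := by
  simp [pd]

lemma pd_coord' (i k : Fin 4) (x : Pt) :
    pd i (fun y => y k) x = if k = i then 1 else 0 := by
  have h : (fun y : Pt => y k) = (ContinuousLinearMap.proj k : Pt →L[ℝ] ℝ) := rfl
  rw [pd, h, ContinuousLinearMap.fderiv]
  simp [Pi.single_apply]

variable (F a b : Pt → ℝ) (x : Pt)

lemma omega1_0 : omega1 x 0 = 1 := rfl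
lemma omega1_1 : omega1 x 1 = 0 := rfl
lemma omega1_2 : omega1 x 2 = 0 := rfl
lemma omega1_3 : omega1 x 3 = -x 1 := rfl
lemma omega2_0 : omega2 x 0 = 0 := rfl
lemma omega2_1 : omega2 x 1 = 1 := rfl
lemma omega2_2 : omega2 x 2 = 0 := rfl
lemma omega2_3 : omega2 x 3 = -x 2 := rfl
lemma omega3_0 : omega3 F a b x 0 = a x := by
  simp [omega3, beta1, beta2, beta3]
lemma omega3_1 : omega3 F a b x 1 = b x := by
  simp [omega3, beta1, beta2, beta3]
lemma omega3_2 : omega3 F a b x 2 = 1 := by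
  simp [omega3, beta1, beta2, beta3]
lemma omega3_3 : omega3 F a b x 3 = -F x + a x * -x 1 + b x * -x 2 := by
  simp [omega3, beta1, beta2, beta3]
lemma Dvec_0 : Dvec F x 0 = x 1 := rfl
lemma Dvec_1 : Dvec F x 1 = x 2 := rfl
lemma Dvec_2 : Dvec F x 2 = F x := rfl
lemma Dvec_3 : Dvec F x 3 = 1 := rfl

end Aux
set_option maxHeartbeats 2000000 in
lemma main_eq (F a b : Pt → ℝ) (hF : ContDiff ℝ (⊤ : ℕ∞) F) (ha : ContDiff ℝ (⊤ : ℕ∞) a)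
    (hb : ContDiff ℝ (⊤ : ℕ∞) b) (x : Pt) (i j : Fin 4) :
    lie2 (Dvec F) (g3 F a b) x i j
      = 2 * Ufun F a b x * omega1 x i * omega1 x j
          + (Vfun F a b x + a x) * (omega1 x i * omega2 x j + omega2 x i * omega1 x j)
          + Wfun F b x * (omega1 x i * omega3 F a b x j + omega3 F a b x i * omega1 x j)
          + 2 * b x * (omega2 x i * omega2 x j) := by
  have hFd : Differentiable ℝ F := hF.differentiable (by simp)
  have had : Differentiable ℝ a := ha.differentiable (by simp)
  have hbd : Differentiable ℝ b := hb.differentiable (by simp)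
  fin_cases i <;> fin_cases j <;>
  · simp only [Fin.zero_eta, Fin.mk_one, show (⟨2, by norm_num⟩ : Fin 4) = 2 from rfl,
      show (⟨3, by norm_num⟩ : Fin 4) = 3 from rfl]
    simp only [lie2, g3, Fin.sum_univ_four, Ufun, Vfun, Wfun, Dop,
      omega1_0, omega1_1, omega1_2, omega1_3, omega2_0, omega2_1, omega2_2, omega2_3,
      omega3_0, omega3_1, omega3_2, omega3_3, Dvec_0, Dvec_1, Dvec_2, Dvec_3]
    simp (disch := fun_prop) only [pd_add', pd_mul', pd_sub', pd_neg', pd_const', pd_coord',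
      mul_zero, zero_mul, mul_one, one_mul, add_zero, zero_add, sub_zero, zero_sub, neg_zero,
      mul_neg, neg_neg, Fin.reduceEq, reduceIte]
    try ring

/-- L_D g = 2U ω¹⊗ω¹ + (V+a)(ω¹⊗ω² + ω²⊗ω¹) + W(ω¹⊗ω³ + ω³⊗ω¹) + 2b ω²⊗ω²;
in particular L_D g = 2U ω¹⊗ω¹ + W·g iff V + a = 0 and 2b = -W. -/
theorem stmt2 (F a b : Pt → ℝ) (hF : ContDiff ℝ (⊤ : ℕ∞) F) (ha : ContDiff ℝ (⊤ : ℕ∞) a)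
    (hb : ContDiff ℝ (⊤ : ℕ∞) b) :
    lie2 (Dvec F) (g3 F a b)
      = (fun x i j => 2 * Ufun F a b x * omega1 x i * omega1 x j
          + (Vfun F a b x + a x) * (omega1 x i * omega2 x j + omega2 x i * omega1 x j)
          + Wfun F b x * (omega1 x i * omega3 F a b x j + omega3 F a b x i * omega1 x j)
          + 2 * b x * (omega2 x i * omega2 x j)) ∧
    ((lie2 (Dvec F) (g3 F a b)
        = fun x i j => 2 * Ufun F a b x * omega1 x i * omega1 x j
            + Wfun F b x * g3 F a b x i j)
      ↔ ((∀ x, Vfun F a b x + a x = 0) ∧ (∀ x, 2 * b x = -(Wfun F b x)))) := by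
  have h1 : lie2 (Dvec F) (g3 F a b)
      = (fun x i j => 2 * Ufun F a b x * omega1 x i * omega1 x j
          + (Vfun F a b x + a x) * (omega1 x i * omega2 x j + omega2 x i * omega1 x j)
          + Wfun F b x * (omega1 x i * omega3 F a b x j + omega3 F a b x i * omega1 x j)
          + 2 * b x * (omega2 x i * omega2 x j)) := by
    funext x i j; exact main_eq F a b hF ha hb x i j
  refine ⟨h1, ?_⟩
  rw [h1]
  constructor
  · intro h
    constructor
    · intro x
      have h01 := congrFun (congrFun (congrFun h x) 0) 1
      simp only [g3, omega1_0, omega1_1, omega2_0, omega2_1, omega3_0, omega3_1] at h01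
      linarith [h01]
    · intro x
      have h11 := congrFun (congrFun (congrFun h x) 1) 1
      simp only [g3, omega1_1, omega2_1, omega3_1] at h11
      linarith [h11]
  · rintro ⟨hV, hW⟩
    funext x i j
    simp only [g3]
    linear_combination (omega1 x i * omega2 x j + omega2 x i * omega1 x j) * hV x
      + omega2 x i * omega2 x j * hW x
end
end

section
/- Let x, y be real numbers with xy < 1, and set J = 1 − xy, b = (√J − 1)/y, b* = (√J − 1)/x (assuming x ≠ 0 ≠ y), and α² = (√J + 1)/(2J). Then α² = (1 + bb*)/(1 − bb*)², and moreover 1/((1 − bb*)α) = α(1 + b*x) and b/((1 − bb*)α) = −α(x + b). (These are the conditions G₊₁ = 0 and G₋₁ = 0.) -/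
/-!
Put `s = √J`, so that `x y = 1 - s² = (1 - s)(1 + s)`. Then `b = -x / (1 + s)` and `b* x = s - 1`,
whence `b b* = (1 - s) / (1 + s)`, `1 - b b* = 2 s / (1 + s)` and `1 + b b* = 2 / (1 + s)`.
With these, all three identities reduce to `2 s² α² = 1 + s`, which is the definition of `α`.
-/

namespace Real

variable {x y s : ℝ}

lemma sub_one_div_eq_neg_div_one_add (hs : 0 ≤ s) (hsq : s ^ 2 = 1 - x * y) (hy : y ≠ 0) :
    (s - 1) / y = -x / (1 + s) := by
  rw [div_eq_div_iff hy (by positivity)]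
  linear_combination hsq

-- For `x = 0` the left side is the junk value `0`, and then `s = 1`.
lemma sub_one_div_mul_cancel_of_sq_eq (hs : 0 ≤ s) (hsq : s ^ 2 = 1 - x * y) :
    (s - 1) / x * x = s - 1 := by
  rcases eq_or_ne x 0 with rfl | hx
  · have hs1 : s = 1 := by nlinarith
    simp [hs1]
  · exact div_mul_cancel₀ _ hx

end Real

namespace GCondition

variable {x s b bs α : ℝ} (hb : b = -x / (1 + s)) (hbs : bs * x = s - 1)
include hb hbs

lemma mul_eq_one_sub_div_one_add : b * bs = (1 - s) / (1 + s) := by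
  rw [hb, div_mul_eq_mul_div, neg_mul, mul_comm, hbs, neg_sub]

variable (hs : 0 < s)
include hs

lemma one_sub_mul_eq : 1 - b * bs = 2 * s / (1 + s) := by
  rw [mul_eq_one_sub_div_one_add hb hbs]
  field_simp
  ring

lemma one_add_mul_eq : 1 + b * bs = 2 / (1 + s) := by
  rw [mul_eq_one_sub_div_one_add hb hbs]
  field_simp
  ring

variable (hα : α ^ 2 * (2 * s ^ 2) = 1 + s)
include hα

lemma sq_eq_one_add_mul_div_one_sub_mul_sq : α ^ 2 = (1 + b * bs) / (1 - b * bs) ^ 2 := by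
  rw [one_add_mul_eq hb hbs hs, one_sub_mul_eq hb hbs hs]
  field_simp
  linear_combination hα

lemma one_div_one_sub_mul_mul_eq : 1 / ((1 - b * bs) * α) = α * (1 + bs * x) := by
  have hα0 : α ≠ 0 := by rintro rfl; nlinarith
  rw [one_sub_mul_eq hb hbs hs, hbs]
  field_simp
  linear_combination -hα

lemma div_one_sub_mul_mul_eq : b / ((1 - b * bs) * α) = -(α * (x + b)) := by
  have hα0 : α ≠ 0 := by rintro rfl; nlinarith
  rw [one_sub_mul_eq hb hbs hs, hb]
  field_simp
  linear_combination x * hα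

end GCondition

theorem stmt10_general (x y : ℝ) (hy : y ≠ 0) (hxy : x * y < 1)
    (J b bs α2 α : ℝ)
    (hJ : J = 1 - x * y)
    (hb : b = (Real.sqrt J - 1) / y)
    (hbs : bs = (Real.sqrt J - 1) / x)
    (hα2 : α2 = (Real.sqrt J + 1) / (2 * J))
    (hα : α = Real.sqrt α2) :
    α2 = (1 + b * bs) / (1 - b * bs) ^ 2 ∧
    1 / ((1 - b * bs) * α) = α * (1 + bs * x) ∧
    b / ((1 - b * bs) * α) = -(α * (x + b)) := by
  have hJpos : 0 < J := by rw [hJ]; linarith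
  set s := Real.sqrt J
  have hs : 0 < s := Real.sqrt_pos.2 hJpos
  have hsq : s ^ 2 = 1 - x * y := by rw [Real.sq_sqrt hJpos.le, hJ]
  have hb' : b = -x / (1 + s) := hb.trans (Real.sub_one_div_eq_neg_div_one_add hs.le hsq hy)
  have hbsx : bs * x = s - 1 := hbs ▸ Real.sub_one_div_mul_cancel_of_sq_eq hs.le hsq
  have hα2α : α ^ 2 = α2 := hα ▸ Real.sq_sqrt (by rw [hα2]; positivity)
  have hαs : α ^ 2 * (2 * s ^ 2) = 1 + s := by
    rw [hα2α, hα2, Real.sq_sqrt hJpos.le]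
    field_simp
    ring
  open GCondition in
  exact ⟨hα2α ▸ sq_eq_one_add_mul_div_one_sub_mul_sq hb' hbsx hs hαs,
    one_div_one_sub_mul_mul_eq hb' hbsx hs hαs, div_one_sub_mul_mul_eq hb' hbsx hs hαs⟩

/-- with J = 1 - xy, b = (√J - 1)/y, b* = (√J - 1)/x and
α² = (√J + 1)/(2J), one has α² = (1 + bb*)/(1 - bb*)², and the relations
1/((1 - bb*)α) = α(1 + b*x) and b/((1 - bb*)α) = -α(x + b)
(the conditions G₊₁ = 0 and G₋₁ = 0). -/
theorem stmt10 (x y : ℝ) (hx : x ≠ 0) (hy : y ≠ 0) (hxy : x * y < 1)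
    (J b bs α2 α : ℝ)
    (hJ : J = 1 - x * y)
    (hb : b = (Real.sqrt J - 1) / y)
    (hbs : bs = (Real.sqrt J - 1) / x)
    (hα2 : α2 = (Real.sqrt J + 1) / (2 * J))
    (hα : α = Real.sqrt α2) :
    α2 = (1 + b * bs) / (1 - b * bs) ^ 2 ∧
    1 / ((1 - b * bs) * α) = α * (1 + bs * x) ∧
    b / ((1 - b * bs) * α) = -(α * (x + b)) :=
  stmt10_general x y hy hxy J b bs α2 α hJ hb hbs hα2 hα
end
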